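/- (Proposition 4) Every optimal arrangement is ∧-shaped: if c is an optimal arrangement of A with c_k = a_n where 1 < k < n, then (1) for all i, j with 1 ≤ i < j ≤ k, c_i < c_j; and (2) for all i, j with k ≤ i < j ≤ n, c_i > c_j. -/
import Mathlib


open Finset

/-- Partial sums of the sequence `c` (1-indexed): `partSum c k = c 1 + ⋯ + c k`. -/
noncomputable def partSum (c : ℕ → ℝ) (k : ℕ) : ℝ := ∑ i ∈ Finset.Icc 1 k, c i

/-- The mean `S̄` of the partial sums `s_1, …, s_n`. -/
noncomputable def meanPS (n : ℕ) (c : ℕ → ℝ) : ℝ :=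
  (1 / (n : ℝ)) * ∑ k ∈ Finset.Icc 1 n, partSum c k

/-- The variance `f(c)` of the partial sums `s_1, …, s_n`. -/
noncomputable def varPS (n : ℕ) (c : ℕ → ℝ) : ℝ :=
  (1 / (n : ℝ)) * ∑ k ∈ Finset.Icc 1 n, (partSum c k - meanPS n c) ^ 2

/-- The `(i,j)`-partial mean `μ_{ij}(S) = (1/(j-i)) ∑_{k=i}^{j-1} s_k`. -/
noncomputable def partMean (c : ℕ → ℝ) (i j : ℕ) : ℝ :=
  (1 / ((j : ℝ) - (i : ℝ))) * ∑ k ∈ Finset.Icc i (j - 1), partSum c k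

/-- The `(i,j)`-interchange of `c`: swap the entries in positions `i` and `j`. -/
noncomputable def swapSeq (c : ℕ → ℝ) (i j : ℕ) : ℕ → ℝ := fun k => c (Equiv.swap i j k)

/-- `c` is an arrangement (permutation) of `a` on the index range `1..n`. -/
def IsArrangement (n : ℕ) (a c : ℕ → ℝ) : Prop :=
  ∃ σ : ℕ → ℕ, Set.BijOn σ (Set.Icc 1 n) (Set.Icc 1 n) ∧
    ∀ k ∈ Set.Icc 1 n, c k = a (σ k)

/-- The dual sequence `c^d = (c_1, c_n, c_{n-1}, …, c_2)`. -/
noncomputable def dualSeq (n : ℕ) (c : ℕ → ℝ) : ℕ → ℝ :=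
  fun k => if 2 ≤ k then c (n + 2 - k) else c k

/- ### Auxiliary lemmas -/

lemma partSum_swap (c : ℕ → ℝ) {i j : ℕ} (hi : 1 ≤ i) (hij : i < j) (m : ℕ) :
    partSum (swapSeq c i j) m =
      partSum c m + (if i ≤ m ∧ m < j then c j - c i else 0) := by
  unfold partSum swapSeq
  rcases lt_or_ge m i with hm | hm
  · rw [if_neg (by omega), add_zero]
    refine Finset.sum_congr rfl fun t ht => ?_
    simp only [Finset.mem_Icc] at ht
    rw [Equiv.swap_apply_of_ne_of_ne (by omega) (by omega)]
  rcases lt_or_ge m j with hm2 | hm2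
  · rw [if_pos ⟨hm, hm2⟩]
    have hmem : i ∈ Finset.Icc 1 m := by simp only [Finset.mem_Icc]; omega
    have h1 : ∀ t ∈ Finset.Icc 1 m, c (Equiv.swap i j t) = Function.update c i (c j) t := by
      intro t ht
      simp only [Finset.mem_Icc] at ht
      rcases eq_or_ne t i with rfl | hti
      · rw [Equiv.swap_apply_left, Function.update_self]
      · rw [Equiv.swap_apply_of_ne_of_ne hti (by omega), Function.update_of_ne hti]
    rw [Finset.sum_congr rfl h1, Finset.sum_update_of_mem hmem]
    rw [← Finset.sum_erase_add _ c hmem, Finset.sdiff_singleton_eq_erase]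
    ring
  · rw [if_neg (by omega), add_zero]
    refine Finset.sum_equiv (Equiv.swap i j) ?_ (fun t _ => rfl)
    intro t
    simp only [Finset.mem_Icc]
    rcases eq_or_ne t i with rfl | hti
    · rw [Equiv.swap_apply_left]; omega
    rcases eq_or_ne t j with rfl | htj
    · rw [Equiv.swap_apply_right]; omega
    · rw [Equiv.swap_apply_of_ne_of_ne hti htj]

lemma filter_eq_Icc {n i j : ℕ} (hi : 1 ≤ i) (hij : i < j) (hj : j ≤ n) :
    (Finset.Icc 1 n).filter (fun m => i ≤ m ∧ m < j) = Finset.Icc i (j-1) := by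
  ext m; simp only [Finset.mem_filter, Finset.mem_Icc]; omega

lemma card_Icc_real {i j : ℕ} (hij : i < j) :
    ((Finset.Icc i (j-1)).card : ℝ) = (j : ℝ) - i := by
  rw [Nat.card_Icc]
  have : j - 1 + 1 - i = j - i := by omega
  rw [this]
  push_cast [Nat.cast_sub hij.le]
  ring

lemma varPS_eq (n : ℕ) (hn : 0 < n) (c : ℕ → ℝ) :
    varPS n c = (∑ k ∈ Finset.Icc 1 n, (partSum c k)^2) / n
      - ((∑ k ∈ Finset.Icc 1 n, partSum c k) / n)^2 := by
  have hN : (n:ℝ) ≠ 0 := Nat.cast_ne_zero.2 hn.ne'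
  rw [varPS]
  set L := ∑ k ∈ Finset.Icc 1 n, partSum c k with hL
  have hmean : meanPS n c = L / n := by rw [meanPS]; ring
  rw [hmean]
  have h1 : ∀ k ∈ Finset.Icc 1 n, (partSum c k - L/n)^2
      = (partSum c k)^2 - (2*(L/n))*(partSum c k) + (L/n)^2 := fun k _ => by ring
  rw [Finset.sum_congr rfl h1, Finset.sum_add_distrib, Finset.sum_sub_distrib,
    ← Finset.mul_sum, Finset.sum_const, nsmul_eq_mul, Nat.card_Icc]
  have : ((n + 1 - 1 : ℕ) : ℝ) = n := by push_cast [Nat.add_sub_cancel]; ring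
  rw [this]
  field_simp
  ring

lemma sum_partSum_swap (c : ℕ → ℝ) {i j n : ℕ} (hi : 1 ≤ i) (hij : i < j) (hj : j ≤ n) :
    ∑ m ∈ Finset.Icc 1 n, partSum (swapSeq c i j) m =
      (∑ m ∈ Finset.Icc 1 n, partSum c m) + ((j : ℝ) - i) * (c j - c i) := by
  rw [Finset.sum_congr rfl (fun m _ => partSum_swap c hi hij m), Finset.sum_add_distrib]
  congr 1
  rw [← Finset.sum_filter, filter_eq_Icc hi hij hj, Finset.sum_const, nsmul_eq_mul,
    card_Icc_real hij]

lemma sum_sq_swap (c : ℕ → ℝ) {i j n : ℕ} (hi : 1 ≤ i) (hij : i < j) (hj : j ≤ n) :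
    ∑ m ∈ Finset.Icc 1 n, (partSum (swapSeq c i j) m)^2 =
      (∑ m ∈ Finset.Icc 1 n, (partSum c m)^2)
      + 2*(c j - c i)*(∑ m ∈ Finset.Icc i (j-1), partSum c m)
      + ((j : ℝ) - i)*(c j - c i)^2 := by
  have h1 : ∀ m ∈ Finset.Icc 1 n, (partSum (swapSeq c i j) m)^2
      = (partSum c m)^2
        + (if i ≤ m ∧ m < j then 2*(c j - c i)*(partSum c m) else 0)
        + (if i ≤ m ∧ m < j then (c j - c i)^2 else 0) := by
    intro m _
    rw [partSum_swap c hi hij m]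
    by_cases h : i ≤ m ∧ m < j
    · rw [if_pos h, if_pos h, if_pos h]; ring
    · rw [if_neg h, if_neg h, if_neg h]; ring
  rw [Finset.sum_congr rfl h1, Finset.sum_add_distrib, Finset.sum_add_distrib]
  congr 1
  · congr 1
    rw [← Finset.sum_filter, filter_eq_Icc hi hij hj, ← Finset.mul_sum]
  · rw [← Finset.sum_filter, filter_eq_Icc hi hij hj, Finset.sum_const, nsmul_eq_mul,
      card_Icc_real hij]

lemma swap_mean_sign (n : ℕ) (c : ℕ → ℝ)
    {i j : ℕ} (hi : 1 ≤ i) (hij : i < j) (hj : j ≤ n)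
    (hopt' : varPS n (swapSeq c i j) ≤ varPS n c) :
    (c j - c i) * (2 * partMean c i j + (c j - c i) * (1 - ((j:ℝ) - i)/n) - 2 * meanPS n c)
      ≤ 0 := by
  have hn : 0 < n := by omega
  have hN : (0:ℝ) < n := by exact_mod_cast hn
  have hd : (0:ℝ) < (j:ℝ) - i := by
    have : (i:ℝ) < j := by exact_mod_cast hij
    linarith
  rw [varPS_eq n hn, varPS_eq n hn, sum_partSum_swap c hi hij hj, sum_sq_swap c hi hij hj]
    at hopt'
  set L := ∑ m ∈ Finset.Icc 1 n, partSum c m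
  set Q := ∑ m ∈ Finset.Icc 1 n, (partSum c m)^2
  set T := ∑ m ∈ Finset.Icc i (j-1), partSum c m with hT
  have hμ : partMean c i j = T / ((j:ℝ) - i) := by rw [partMean]; ring
  have hS : meanPS n c = L / n := by rw [meanPS]; ring
  rw [hμ, hS]
  set d : ℝ := (j:ℝ) - i
  set δ : ℝ := c j - c i
  have key : (2*δ*T + d*δ^2)/n - (2*L*(d*δ) + (d*δ)^2)/n^2 ≤ 0 := by
    have e1 : Q/n + (2*δ*T + d*δ^2)/n - ((L + d*δ)/n)^2 ≤ Q/n - (L/n)^2 := by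
      calc Q/n + (2*δ*T + d*δ^2)/n - ((L + d*δ)/n)^2
          = (Q + 2*δ*T + d*δ^2)/n - ((L + d*δ)/n)^2 := by ring
        _ ≤ Q/n - (L/n)^2 := hopt'
    have : ((L + d*δ)/n)^2 = (L/n)^2 + (2*L*(d*δ) + (d*δ)^2)/n^2 := by
      field_simp; ring
    linarith [e1, this.ge, this.le]
  have expand : δ * (2 * (T/d) + δ * (1 - d/n) - 2 * (L/n))
      = ((n:ℝ)/d) * ((2*δ*T + d*δ^2)/n - (2*L*(d*δ) + (d*δ)^2)/n^2) := by
    field_simp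
    ring
  rw [expand]
  have : (0:ℝ) < (n:ℝ)/d := by positivity
  exact mul_nonpos_of_nonneg_of_nonpos this.le key

lemma mean_compare {n : ℕ} {c : ℕ → ℝ} {i j : ℕ} (hi : 1 ≤ i) (hij : i < j) (hj : j ≤ n)
    (h : (c j - c i) *
      (2 * partMean c i j + (c j - c i) * (1 - ((j:ℝ) - i)/n) - 2 * meanPS n c) ≤ 0) :
    (c i < c j → partMean c i j < meanPS n c) ∧
      (c j < c i → meanPS n c < partMean c i j) := by
  have hN : (0:ℝ) < n := by
    have : 0 < n := by omega
    exact_mod_cast this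
  have hfrac : 0 < 1 - ((j:ℝ) - i)/n := by
    rw [sub_pos, div_lt_one hN]
    have h1 : (j:ℝ) ≤ n := by exact_mod_cast hj
    have h2 : (1:ℝ) ≤ i := by exact_mod_cast hi
    linarith
  constructor
  · intro hlt
    have hδ : 0 < c j - c i := by linarith
    by_contra hge
    push_neg at hge
    have hB : 0 < 2 * partMean c i j + (c j - c i) * (1 - ((j:ℝ) - i)/n) - 2 * meanPS n c := by
      nlinarith [mul_pos hδ hfrac]
    nlinarith [mul_pos hδ hB]
  · intro hlt
    have hδ : c j - c i < 0 := by linarith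
    by_contra hge
    push_neg at hge
    have hB : 2 * partMean c i j + (c j - c i) * (1 - ((j:ℝ) - i)/n) - 2 * meanPS n c < 0 := by
      nlinarith [mul_pos (neg_pos.2 hδ) hfrac]
    nlinarith [mul_pos_of_neg_of_neg hδ hB]

lemma swap_maps {n i j : ℕ} (hi : 1 ≤ i) (hj : j ≤ n) (hij : i ≤ j) :
    ∀ t ∈ Set.Icc 1 n, Equiv.swap i j t ∈ Set.Icc 1 n := by
  intro t ht
  simp only [Set.mem_Icc] at *
  rcases eq_or_ne t i with rfl | hti
  · rw [Equiv.swap_apply_left]; omega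
  rcases eq_or_ne t j with rfl | htj
  · rw [Equiv.swap_apply_right]; omega
  · rw [Equiv.swap_apply_of_ne_of_ne hti htj]; omega

lemma arrangement_swap {n : ℕ} {a c : ℕ → ℝ} (hc : IsArrangement n a c)
    {i j : ℕ} (hi : 1 ≤ i) (hij : i ≤ j) (hj : j ≤ n) :
    IsArrangement n a (swapSeq c i j) := by
  obtain ⟨σ, hbij, hval⟩ := hc
  refine ⟨σ ∘ (Equiv.swap i j), Set.BijOn.comp hbij ?_, ?_⟩
  · refine ⟨swap_maps hi hj hij, (Equiv.injective _).injOn, ?_⟩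
    intro y hy
    exact ⟨Equiv.swap i j y, swap_maps hi hj hij y hy, Equiv.swap_apply_self i j y⟩
  · intro t ht
    exact hval _ (swap_maps hi hj hij t ht)

lemma partSum_le {c : ℕ → ℝ} {n p q : ℕ} (hpos : ∀ t, 1 ≤ t → t ≤ n → 0 < c t)
    (hpq : p ≤ q) (hq : q ≤ n) : partSum c p ≤ partSum c q := by
  rw [partSum, partSum]
  refine Finset.sum_le_sum_of_subset_of_nonneg (Finset.Icc_subset_Icc le_rfl hpq) ?_
  intro t ht _
  simp only [Finset.mem_Icc] at ht
  exact (hpos t ht.1 (ht.2.trans hq)).le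

lemma partSum_lt {c : ℕ → ℝ} {n p q : ℕ} (hpos : ∀ t, 1 ≤ t → t ≤ n → 0 < c t)
    (hpq : p < q) (hq : q ≤ n) : partSum c p < partSum c q := by
  have h := partSum_le hpos (show p ≤ q - 1 by omega) (show q - 1 ≤ n by omega)
  have h2 : partSum c q = partSum c (q-1) + c q := by
    rw [partSum, partSum]
    have : Finset.Icc 1 q = insert q (Finset.Icc 1 (q-1)) := by
      ext t; simp only [Finset.mem_insert, Finset.mem_Icc]; omega
    rw [this, Finset.sum_insert (by simp only [Finset.mem_Icc]; omega)]
    ring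
  have := hpos q (by omega) hq
  linarith

lemma partMean_le_partSum {c : ℕ → ℝ} {n i j : ℕ} (hpos : ∀ t, 1 ≤ t → t ≤ n → 0 < c t)
    (hij : i < j) (hj : j ≤ n) : partMean c i j ≤ partSum c (j-1) := by
  rw [partMean]
  have hd : (0:ℝ) < (j:ℝ) - i := by
    have : (i:ℝ) < j := by exact_mod_cast hij
    linarith
  have hsum : ∑ k ∈ Finset.Icc i (j-1), partSum c k ≤ ((j:ℝ) - i) * partSum c (j-1) := by
    calc ∑ k ∈ Finset.Icc i (j-1), partSum c k
        ≤ ∑ k ∈ Finset.Icc i (j-1), partSum c (j-1) := by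
          refine Finset.sum_le_sum fun t ht => ?_
          simp only [Finset.mem_Icc] at ht
          exact partSum_le hpos ht.2 (by omega)
      _ = ((j:ℝ) - i) * partSum c (j-1) := by
          rw [Finset.sum_const, nsmul_eq_mul, card_Icc_real hij]
  calc (1 / ((j:ℝ) - i)) * ∑ k ∈ Finset.Icc i (j-1), partSum c k
      ≤ (1 / ((j:ℝ) - i)) * (((j:ℝ) - i) * partSum c (j-1)) :=
        mul_le_mul_of_nonneg_left hsum (by positivity)
    _ = partSum c (j-1) := by field_simp

lemma partSum_le_partMean {c : ℕ → ℝ} {n i j : ℕ} (hpos : ∀ t, 1 ≤ t → t ≤ n → 0 < c t)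
    (hij : i < j) (hj : j ≤ n) : partSum c i ≤ partMean c i j := by
  rw [partMean]
  have hd : (0:ℝ) < (j:ℝ) - i := by
    have : (i:ℝ) < j := by exact_mod_cast hij
    linarith
  have hsum : ((j:ℝ) - i) * partSum c i ≤ ∑ k ∈ Finset.Icc i (j-1), partSum c k := by
    calc ((j:ℝ) - i) * partSum c i
        = ∑ k ∈ Finset.Icc i (j-1), partSum c i := by
          rw [Finset.sum_const, nsmul_eq_mul, card_Icc_real hij]
      _ ≤ ∑ k ∈ Finset.Icc i (j-1), partSum c k := by
          refine Finset.sum_le_sum fun t ht => ?_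
          simp only [Finset.mem_Icc] at ht
          exact partSum_le hpos ht.1 (by omega)
  calc partSum c i = (1 / ((j:ℝ) - i)) * (((j:ℝ) - i) * partSum c i) := by field_simp
    _ ≤ (1 / ((j:ℝ) - i)) * ∑ k ∈ Finset.Icc i (j-1), partSum c k :=
        mul_le_mul_of_nonneg_left hsum (by positivity)

lemma partMean_lt_partMean {c : ℕ → ℝ} {n i j l : ℕ} (hpos : ∀ t, 1 ≤ t → t ≤ n → 0 < c t)
    (hij : i < j) (hjl : j < l) (hl : l ≤ n) :
    partMean c i j < partMean c j l := by
  have h1 : partMean c i j ≤ partSum c (j-1) := partMean_le_partSum hpos hij (by omega)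
  have h2 : partSum c j ≤ partMean c j l := partSum_le_partMean hpos hjl hl
  have h3 : partSum c (j-1) < partSum c j := partSum_lt hpos (by omega) (by omega)
  linarith

/-- Proposition 4: every optimal arrangement is ∧-shaped. -/
theorem optimal_wedge_shaped (n : ℕ) (hn : 2 ≤ n) (a : ℕ → ℝ)
    (ha1 : 0 < a 1) (ha : ∀ i j, 1 ≤ i → i < j → j ≤ n → a i < a j)
    (c : ℕ → ℝ) (hc : IsArrangement n a c)
    (hopt : ∀ c'', IsArrangement n a c'' → varPS n c'' ≤ varPS n c)
    (k : ℕ) (hk1 : 1 < k) (hkn : k < n) (hck : c k = a n) :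
    (∀ i j, 1 ≤ i → i < j → j ≤ k → c i < c j) ∧
    (∀ i j, k ≤ i → i < j → j ≤ n → c j < c i) := by
  obtain ⟨σ, hbij, hval⟩ := id hc
  have hσmem : ∀ t, 1 ≤ t → t ≤ n → σ t ∈ Set.Icc 1 n :=
    fun t h1 h2 => hbij.mapsTo ⟨h1, h2⟩
  have ha_pos : ∀ m, 1 ≤ m → m ≤ n → 0 < a m := by
    intro m h1 h2
    rcases eq_or_lt_of_le h1 with h | h
    · rw [← h]; exact ha1
    · exact ha1.trans (ha 1 m le_rfl h h2)
  have ha_le : ∀ m, 1 ≤ m → m ≤ n → a m ≤ a n := by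
    intro m h1 h2
    rcases eq_or_lt_of_le h2 with h | h
    · rw [h]
    · exact (ha m n h1 h le_rfl).le
  have hc_pos : ∀ t, 1 ≤ t → t ≤ n → 0 < c t := by
    intro t h1 h2
    rw [hval t ⟨h1, h2⟩]
    obtain ⟨hs1, hs2⟩ := hσmem t h1 h2
    exact ha_pos _ hs1 hs2
  have hc_le : ∀ t, 1 ≤ t → t ≤ n → c t ≤ a n := by
    intro t h1 h2
    rw [hval t ⟨h1, h2⟩]
    obtain ⟨hs1, hs2⟩ := hσmem t h1 h2
    exact ha_le _ hs1 hs2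
  have hc_ne : ∀ s t, 1 ≤ s → s ≤ n → 1 ≤ t → t ≤ n → s ≠ t → c s ≠ c t := by
    intro s t hs1 hs2 ht1 ht2 hst
    rw [hval s ⟨hs1, hs2⟩, hval t ⟨ht1, ht2⟩]
    have hσne : σ s ≠ σ t := fun h => hst (hbij.injOn ⟨hs1, hs2⟩ ⟨ht1, ht2⟩ h)
    obtain ⟨hp1, hp2⟩ := hσmem s hs1 hs2
    obtain ⟨hq1, hq2⟩ := hσmem t ht1 ht2
    rcases lt_or_gt_of_ne hσne with h | h
    · exact (ha _ _ hp1 h hq2).ne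
    · exact (ha _ _ hq1 h hp2).ne'
  have key : ∀ i j, 1 ≤ i → i < j → j ≤ n →
      (c i < c j → partMean c i j < meanPS n c) ∧
        (c j < c i → meanPS n c < partMean c i j) := by
    intro i j h1 h2 h3
    exact mean_compare h1 h2 h3
      (swap_mean_sign n c h1 h2 h3 (hopt _ (arrangement_swap hc h1 h2.le h3)))
  constructor
  · intro i j hi hij hjk
    by_contra hne
    push_neg at hne
    have hji : c j < c i :=
      lt_of_le_of_ne hne (hc_ne j i (by omega) (by omega) hi (by omega) (by omega))
    have hjk' : j < k := by
      rcases eq_or_lt_of_le hjk with h | h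
      · exfalso
        have := hc_le i hi (by omega)
        rw [h, hck] at hji
        linarith
      · exact h
    have h1 := (key i j hi hij (by omega)).2 hji
    have hcjk : c j < c k := by
      have := hc_le i hi (by omega)
      rw [hck]; linarith
    have h2 := (key j k (by omega) hjk' (by omega)).1 hcjk
    have h3 := partMean_lt_partMean hc_pos hij hjk' hkn.le
    linarith
  · intro i j hki hij hjn
    by_contra hne
    push_neg at hne
    have hij' : c i < c j :=
      lt_of_le_of_ne hne (hc_ne i j (by omega) (by omega) (by omega) hjn (by omega))
    have hki' : k < i := by
      rcases eq_or_lt_of_le hki with h | h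
      · exfalso
        have := hc_le j (by omega) hjn
        rw [← h, hck] at hij'
        linarith
      · exact h
    have h1 := (key i j (by omega) hij hjn).1 hij'
    have hcik : c i < c k := by
      have := hc_le j (by omega) hjn
      rw [hck]; linarith
    have h2 := (key k i (by omega) hki' (by omega)).2 hcik
    have h3 := partMean_lt_partMean hc_pos hki' hij hjn
    linarith
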